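/- If for every framed knot (K, f) in S³ such that the represented 4-manifold admits a Stein structure one has f < tb̄(K), then for all n ≥ 2 and m ≥ 0 the contractible 4-manifold X_{n, m+4n} admits no Stein structure, yielding infinitely many compact contractible oriented smooth 4-manifolds with Stein fillable boundary admitting no Stein structure. -/
import Mathlib


/-- if every framed knot representing a Stein 4-manifold has
framing less than the maximal Thurston-Bennequin number, then each X_{n,m+4n}
(n ≥ 2, m ≥ 0) admits no Stein structure, yielding infinitely many compact
contractible 4-manifolds with Stein fillable boundary and no Stein structure. -/
theorem problem_tb_implies_nonStein_contractible
    (Knot M3 M4 : Type)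
    (rep : Knot → ℤ → M4)
    (tbbar : Knot → ℤ)
    (hasStein : M4 → Prop)
    (contractible : M4 → Prop)
    (boundary : M4 → M3)
    (steinFillable : M3 → Prop)
    (bconnSum : M4 → M4 → M4)
    (X : ℤ → ℤ → M4)
    (Kmn : ℤ → ℤ → Knot)
    (lam : M3 → ℤ)                          -- Casson invariant
    -- key facts of the paper:
    (hX_contractible : ∀ n k : ℤ, contractible (X n k))
    (hX_fillable : ∀ n k : ℤ, 2 ≤ n → 4 * n - 4 ≤ k → steinFillable (boundary (X n k)))
    (hrep : ∀ m n : ℤ, 0 ≤ m → 2 ≤ n → ∃ S : M4,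
      hasStein S ∧ rep (Kmn m n) (-n) = bconnSum (X n (m + 4 * n)) S)
    (hbsum : ∀ A B : M4, hasStein A → hasStein B → hasStein (bconnSum A B))
    (hcasson : ∀ n k : ℤ, lam (boundary (X n k)) = -2 * n)
    (htb : ∀ m n : ℤ, 0 ≤ m → 2 ≤ n → tbbar (Kmn m n) = -2 * m * n - 3 * n + 1)
    -- affirmative answer to Problem 1.3:
    (hProblem : ∀ (K : Knot) (f : ℤ), hasStein (rep K f) → f < tbbar K) :
    (∀ n m : ℤ, 2 ≤ n → 0 ≤ m → ¬ hasStein (X n (m + 4 * n))) ∧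
    Set.Infinite {W : M4 | contractible W ∧ steinFillable (boundary W) ∧ ¬ hasStein W} := by
  have key : ∀ n m : ℤ, 2 ≤ n → 0 ≤ m → ¬ hasStein (X n (m + 4 * n)) := by
    intro n m hn hm hS
    obtain ⟨S, hSt, hreq⟩ := hrep m n hm hn
    have h1 : hasStein (rep (Kmn m n) (-n)) := by
      rw [hreq]; exact hbsum _ _ hS hSt
    have h2 := hProblem _ _ h1
    rw [htb m n hm hn] at h2
    nlinarith
  refine ⟨key, ?_⟩
  apply Set.infinite_of_injective_forall_mem
    (f := fun j : ℕ => X (j + 2) (0 + 4 * (j + 2)))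
  case hi =>
    intro a b hab
    have := congrArg (fun W => lam (boundary W)) hab
    simp only [hcasson] at this
    omega
  case hf =>
    intro j
    refine ⟨hX_contractible _ _, hX_fillable _ _ (by omega) (by omega), key _ _ (by omega) le_rfl⟩
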